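/- arXiv:quant-ph/0312044 — 3 statements merged into one kernel-verified Lean document; each statement's English description precedes it below -/
import Mathlib

section
/- For every n ≥ 2, there is an order isomorphism between the order dual of (Ir(Δⁿ), ⊑) and the set of nonempty subsets of {1,…,n} ordered by inclusion. -/
/-!
The irreducible states are exactly the uniform distributions `⊥_S` on nonempty sets `S`.
Along a common decreasing ordering of `x` and `y`, the defining inequalities of `x ⊑ y` chain to
all pairs of indices, so `x ⊑ y` forces the support of `y` into that of `x` and the maximizers of
`y` into those of `x`; conversely, every state lies below the uniform distribution on any nonempty
set of its maximizers. Hence `x ⊑ ⊥_T ↔ T ⊆ argmax x`: the maximal states are the point masses,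
those above `x` sit at the maximizers of `x`, and their infimum is `⊥_{argmax x}`. So `x` is
irreducible iff `x = ⊥_{argmax x}`, and `x ↦ argmax x` reverses the order bijectively.
-/

/-- Δⁿ : classical n-states. -/
def IsClassicalState (n : ℕ) (x : Fin n → ℝ) : Prop :=
  (∀ i, 0 ≤ x i) ∧ ∑ i, x i = 1

def ClState (n : ℕ) := {x : Fin n → ℝ // IsClassicalState n x}

/-- The Bayesian order (symmetric characterization). -/
def bayesLE {n : ℕ} (x y : Fin n → ℝ) : Prop :=
  ∃ σ : Equiv.Perm (Fin n),
    Antitone (fun i => x (σ i)) ∧ Antitone (fun i => y (σ i)) ∧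
    ∀ i j : Fin n, (i : ℕ) + 1 = (j : ℕ) →
      x (σ i) * y (σ j) ≤ x (σ j) * y (σ i)

def clLE {n : ℕ} (x y : ClState n) : Prop := bayesLE x.val y.val

/-- The maximal elements with respect to `le`. -/
def MaxElts {α : Type*} (le : α → α → Prop) : Set α := {x | ∀ y, le x y → y = x}

/-- `a` is the infimum (greatest lower bound) of `S` with respect to `le`. -/
def IsInf' {α : Type*} (le : α → α → Prop) (S : Set α) (a : α) : Prop :=
  (∀ s ∈ S, le a s) ∧ ∀ b, (∀ s ∈ S, le b s) → le b a

/-- `x` is irreducible: the infimum of ↑x ∩ max(D) exists and equals x. -/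
def Irr {α : Type*} (le : α → α → Prop) : Set α :=
  {x | IsInf' le {y | le x y ∧ y ∈ MaxElts le} x}

open Finset

theorem Monovary.exists_perm_antitone {α β : Type*} [LinearOrder α] [LinearOrder β] {n : ℕ}
    {f : Fin n → α} {g : Fin n → β} (hfg : Monovary f g) :
    ∃ σ : Equiv.Perm (Fin n), Antitone (f ∘ σ) ∧ Antitone (g ∘ σ) := by
  let key : Fin n → (α ×ₗ β)ᵒᵈ := fun i => OrderDual.toDual (toLex (f i, g i))
  set σ := Tuple.sort key
  have hσ : ∀ ⦃i j⦄, i ≤ j → toLex (f (σ j), g (σ j)) ≤ toLex (f (σ i), g (σ i)) :=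
    fun i j hij => Tuple.monotone_sort key hij
  refine ⟨σ, fun i j hij => ?_, fun i j hij => ?_⟩
  · rcases Prod.Lex.toLex_le_toLex.1 (hσ hij) with h | h
    exacts [h.le, h.1.le]
  · rcases Prod.Lex.toLex_le_toLex.1 (hσ hij) with h | h
    · exact le_of_not_gt fun hg => h.not_ge (hfg hg)
    · exact h.2

-- The ratio `a / b` increases along the support of `b`, an initial segment since `b` is antitone.
theorem cross_mul_le_of_consecutive {𝕜 : Type*} [Field 𝕜] [LinearOrder 𝕜] [IsStrictOrderedRing 𝕜]
    {n : ℕ} {a b : Fin n → 𝕜} (ha : 0 ≤ a) (hb : 0 ≤ b) (hb_anti : Antitone b)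
    (h : ∀ i j : Fin n, (i : ℕ) + 1 = j → a i * b j ≤ a j * b i) {i j : Fin n} (hij : i ≤ j) :
    a i * b j ≤ a j * b i := by
  obtain ⟨d, hd⟩ := Nat.exists_eq_add_of_le (Fin.le_def.1 hij)
  induction d generalizing j with
  | zero => rw [show j = i from Fin.ext (by omega)]
  | succ d ih =>
    set k : Fin n := ⟨i + d, by omega⟩
    have hik := ih (j := k) (Fin.le_def.2 (by simp [k])) rfl
    have hkj := h k j (by simp [k]; omega)
    have hjk : b j ≤ b k := hb_anti (Fin.le_def.2 (by simp [k]; omega))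
    rcases (hb k).eq_or_lt with hbk | hbk
    · have hbj : b j = 0 := le_antisymm (hjk.trans_eq hbk.symm) (hb j)
      rw [hbj, mul_zero]
      exact mul_nonneg (ha j) (hb i)
    · refine le_of_mul_le_mul_right ?_ hbk
      nlinarith [mul_le_mul_of_nonneg_right hik (hb j), mul_le_mul_of_nonneg_right hkj (hb i)]

section Uniform

variable {ι : Type*} [DecidableEq ι]

noncomputable def uniform (S : Finset ι) (i : ι) : ℝ :=
  if i ∈ S then (#S : ℝ)⁻¹ else 0

theorem uniform_of_mem {S : Finset ι} {i : ι} (hi : i ∈ S) : uniform S i = (#S : ℝ)⁻¹ :=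
  if_pos hi

theorem uniform_of_notMem {S : Finset ι} {i : ι} (hi : i ∉ S) : uniform S i = 0 :=
  if_neg hi

theorem uniform_nonneg (S : Finset ι) : 0 ≤ uniform S := fun i => by
  unfold uniform; split_ifs <;> positivity

theorem uniform_pos_iff {S : Finset ι} {i : ι} : 0 < uniform S i ↔ i ∈ S := by
  refine ⟨fun h => by_contra fun hi => h.ne' (uniform_of_notMem hi), fun hi => ?_⟩
  rw [uniform_of_mem hi, inv_pos, Nat.cast_pos]
  exact card_pos.2 ⟨i, hi⟩

theorem sum_uniform [Fintype ι] {S : Finset ι} (hS : S.Nonempty) : ∑ i, uniform S i = 1 := by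
  simp only [uniform]
  rw [sum_ite_mem, univ_inter, sum_const, nsmul_eq_mul, mul_inv_cancel₀]
  exact Nat.cast_ne_zero.2 hS.card_ne_zero

theorem eq_uniform_of_sum_eq_one [Fintype ι] {x : ι → ℝ} {S : Finset ι} (hx : ∑ i, x i = 1)
    (h_out : ∀ i ∉ S, x i = 0) (h_const : ∀ i ∈ S, ∀ j ∈ S, x i = x j) : x = uniform S := by
  have hsum : ∑ i ∈ S, x i = 1 := by
    rwa [sum_subset (subset_univ S) fun i _ hi => h_out i hi]
  funext i
  by_cases hi : i ∈ S
  · rw [sum_congr rfl fun j hj => h_const j hj i hi, sum_const, nsmul_eq_mul] at hsum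
    rw [uniform_of_mem hi, eq_inv_of_mul_eq_one_right hsum]
  · rw [uniform_of_notMem hi, h_out i hi]

end Uniform

section Maximizers

variable {ι β : Type*} [Fintype ι] [LinearOrder β]

open Classical in
noncomputable def maximizers (x : ι → β) : Finset ι :=
  {k | ∀ i, x i ≤ x k}

theorem mem_maximizers {x : ι → β} {k : ι} :
    k ∈ maximizers x ↔ ∀ i, x i ≤ x k := by
  simp [maximizers]

theorem maximizers_nonempty [Nonempty ι] (x : ι → β) :
    (maximizers x).Nonempty := by
  obtain ⟨k, -, hk⟩ := exists_max_image univ x univ_nonempty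
  exact ⟨k, mem_maximizers.2 fun i => hk i (mem_univ i)⟩

theorem maximizers_uniform [DecidableEq ι] {S : Finset ι} (hS : S.Nonempty) :
    maximizers (uniform S) = S := by
  ext k
  rw [mem_maximizers]
  refine ⟨fun h => ?_, fun hk i => ?_⟩
  · obtain ⟨s, hs⟩ := hS
    by_contra hk
    have := h s
    rw [uniform_of_notMem hk] at this
    exact this.not_gt (uniform_pos_iff.2 hs)
  · by_cases hi : i ∈ S
    · rw [uniform_of_mem hi, uniform_of_mem hk]
    · rw [uniform_of_notMem hi]
      exact (uniform_pos_iff.2 hk).le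

end Maximizers

section BayesianOrder

variable {n : ℕ} {x y : Fin n → ℝ}

theorem bayesLE.exists_perm_cross_mul_le (hx : 0 ≤ x) (hy : 0 ≤ y) (h : bayesLE x y) :
    ∃ σ : Equiv.Perm (Fin n), Antitone (x ∘ σ) ∧ Antitone (y ∘ σ) ∧
      ∀ i j, i ≤ j → x (σ i) * y (σ j) ≤ x (σ j) * y (σ i) := by
  obtain ⟨σ, hxσ, hyσ, hσ⟩ := h
  exact ⟨σ, hxσ, hyσ, fun i j hij =>
    cross_mul_le_of_consecutive (fun k => hx (σ k)) (fun k => hy (σ k)) hyσ hσ hij⟩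

theorem bayesLE.eq_zero_of_eq_zero (hx : 0 ≤ x) (hy : 0 ≤ y) (h : bayesLE x y) {s t : Fin n}
    (hs : 0 < x s) (ht : x t = 0) : y t = 0 := by
  obtain ⟨σ, hxσ, -, hσ⟩ := h.exists_perm_cross_mul_le hx hy
  have hst : σ.symm s ≤ σ.symm t := (hxσ.reflect_lt (by simpa [ht] using hs)).le
  have hyt := hσ _ _ hst
  simp only [Equiv.apply_symm_apply, ht, zero_mul] at hyt
  exact le_antisymm (nonpos_of_mul_nonpos_left (by linarith) hs) (hy t)

theorem bayesLE.mem_maximizers (hx : 0 ≤ x) (hy : 0 ≤ y) (h : bayesLE x y) {t : Fin n}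
    (ht : t ∈ maximizers y) (hyt : 0 < y t) : t ∈ maximizers x := by
  obtain ⟨σ, hxσ, -, hσ⟩ := h.exists_perm_cross_mul_le hx hy
  rw [_root_.mem_maximizers] at ht ⊢
  intro u
  rcases le_total (σ.symm u) (σ.symm t) with hut | htu
  · have hcross := hσ _ _ hut
    simp only [Equiv.apply_symm_apply] at hcross
    exact le_of_mul_le_mul_right (hcross.trans (mul_le_mul_of_nonneg_left (ht u) (hx t))) hyt
  · simpa using hxσ htu

theorem bayesLE_uniform (hx : 0 ≤ x) {S : Finset (Fin n)} (hS : S ⊆ maximizers x) :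
    bayesLE x (uniform S) := by
  have hconst : ∀ i ∈ S, ∀ j ∈ S, x i = x j := fun i hi j hj =>
    le_antisymm (mem_maximizers.1 (hS hj) i) (mem_maximizers.1 (hS hi) j)
  have hmonovary : Monovary x (uniform S) := fun i j hij =>
    mem_maximizers.1 (hS (uniform_pos_iff.1 ((uniform_nonneg S i).trans_lt hij))) i
  obtain ⟨σ, hxσ, huσ⟩ := hmonovary.exists_perm_antitone
  refine ⟨σ, hxσ, huσ, fun i j hij => ?_⟩
  by_cases hj : σ j ∈ S
  · have hi : σ i ∈ S :=
      uniform_pos_iff.1 ((uniform_pos_iff.2 hj).trans_le (huσ (Fin.le_def.2 (by omega))))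
    rw [hconst _ hi _ hj, uniform_of_mem hi, uniform_of_mem hj]
  · rw [uniform_of_notMem hj, mul_zero]
    exact mul_nonneg (hx _) (uniform_nonneg S _)

theorem bayesLE_uniform_iff (hx : 0 ≤ x) {T : Finset (Fin n)} (hT : T.Nonempty) :
    bayesLE x (uniform T) ↔ T ⊆ maximizers x :=
  ⟨fun h k hk => h.mem_maximizers hx (uniform_nonneg T) (by rwa [maximizers_uniform hT])
    (uniform_pos_iff.2 hk), bayesLE_uniform hx⟩

end BayesianOrder

theorem IsClassicalState.nonempty {n : ℕ} {x : Fin n → ℝ} (hx : IsClassicalState n x) :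
    Nonempty (Fin n) := by
  by_contra h
  rw [not_nonempty_iff] at h
  simpa using hx.2

namespace ClState

variable {n : ℕ}

noncomputable def uniform (S : Finset (Fin n)) (hS : S.Nonempty) : ClState n :=
  ⟨_root_.uniform S, uniform_nonneg S, sum_uniform hS⟩

theorem maximizers_nonempty (x : ClState n) : (maximizers x.val).Nonempty :=
  have := x.2.nonempty
  _root_.maximizers_nonempty x.val

theorem mem_maxElts_iff {x : ClState n} :
    x ∈ MaxElts clLE ↔ ∃ k, x.val = _root_.uniform {k} := by
  constructor
  · intro hx
    obtain ⟨k, hk⟩ := x.maximizers_nonempty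
    have hle : clLE x (uniform {k} (singleton_nonempty k)) :=
      bayesLE_uniform x.2.1 (singleton_subset_iff.2 hk)
    exact ⟨k, congrArg Subtype.val (hx _ hle).symm⟩
  · rintro ⟨k, hxk⟩ y hxy
    have hle : bayesLE (_root_.uniform {k}) y.val := hxk ▸ hxy
    refine Subtype.ext (hxk ▸ eq_uniform_of_sum_eq_one y.2.2 (fun i hi => ?_) (by simp))
    exact hle.eq_zero_of_eq_zero (uniform_nonneg _) y.2.1
      (uniform_pos_iff.2 (mem_singleton_self k)) (uniform_of_notMem hi)

theorem le_and_mem_maxElts_iff {x y : ClState n} :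
    clLE x y ∧ y ∈ MaxElts clLE ↔ ∃ k ∈ maximizers x.val, y.val = _root_.uniform {k} := by
  rw [mem_maxElts_iff]
  constructor
  · rintro ⟨hxy, k, hyk⟩
    have hle : bayesLE x.val (_root_.uniform {k}) := hyk ▸ hxy
    exact ⟨k, singleton_subset_iff.1 ((bayesLE_uniform_iff x.2.1 (singleton_nonempty k)).1 hle), hyk⟩
  · rintro ⟨k, hk, hyk⟩
    refine ⟨?_, k, hyk⟩
    show bayesLE x.val y.val
    rw [hyk]
    exact bayesLE_uniform x.2.1 (singleton_subset_iff.2 hk)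

theorem mem_Irr_iff {x : ClState n} :
    x ∈ Irr clLE ↔ x.val = _root_.uniform (maximizers x.val) := by
  set A := maximizers x.val
  constructor
  · rintro ⟨-, hglb⟩
    have hle : clLE (uniform A x.maximizers_nonempty) x := by
      refine hglb _ fun y hy => ?_
      obtain ⟨k, hk, hyk⟩ := le_and_mem_maxElts_iff.1 hy
      show bayesLE (_root_.uniform A) y.val
      rw [hyk, bayesLE_uniform_iff (uniform_nonneg A) (singleton_nonempty k),
        maximizers_uniform x.maximizers_nonempty]
      exact singleton_subset_iff.2 hk
    obtain ⟨s, hs⟩ := x.maximizers_nonempty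
    refine eq_uniform_of_sum_eq_one x.2.2 (fun t ht => ?_) fun i hi j hj =>
      le_antisymm (mem_maximizers.1 hj i) (mem_maximizers.1 hi j)
    exact hle.eq_zero_of_eq_zero (uniform_nonneg A) x.2.1 (uniform_pos_iff.2 hs)
      (uniform_of_notMem ht)
  · intro hx
    refine ⟨fun y hy => hy.1, fun b hb => ?_⟩
    show bayesLE b.val x.val
    rw [hx]
    refine bayesLE_uniform b.2.1 fun k hk => ?_
    have hbk : bayesLE b.val (_root_.uniform {k}) :=
      hb (uniform {k} (singleton_nonempty k)) (le_and_mem_maxElts_iff.2 ⟨k, hk, rfl⟩)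
    exact singleton_subset_iff.1 ((bayesLE_uniform_iff b.2.1 (singleton_nonempty k)).1 hbk)

end ClState

theorem irreducibles_classical_general (n : ℕ) :
    ∃ f : {x : ClState n // x ∈ Irr clLE} → {s : Set (Fin n) // s.Nonempty},
      Function.Bijective f ∧
      ∀ a b : {x : ClState n // x ∈ Irr clLE},
        clLE b.val a.val ↔ (f a).val ⊆ (f b).val := by
  classical
  have hunif (a : {x : ClState n // x ∈ Irr clLE}) :
      a.val.val = uniform (maximizers a.val.val) := ClState.mem_Irr_iff.1 a.2
  refine ⟨fun a => ⟨maximizers a.val.val, coe_nonempty.2 a.val.maximizers_nonempty⟩,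
    ⟨fun a b hab => ?_, fun s => ?_⟩, fun a b => ?_⟩
  · have hmax : maximizers a.val.val = maximizers b.val.val :=
      coe_injective (congrArg Subtype.val hab)
    exact Subtype.ext (Subtype.ext (by rw [hunif a, hunif b, hmax]))
  · have hS : s.val.toFinset.Nonempty := Set.toFinset_nonempty.2 s.2
    have hmax : maximizers (uniform s.val.toFinset) = s.val.toFinset := maximizers_uniform hS
    refine ⟨⟨ClState.uniform _ hS, ClState.mem_Irr_iff.2 (congrArg uniform hmax.symm)⟩,
      Subtype.ext ?_⟩
    show ((maximizers (uniform s.val.toFinset) : Finset (Fin n)) : Set (Fin n)) = s.val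
    rw [hmax, Set.coe_toFinset]
  · show bayesLE b.val.val a.val.val ↔ _
    rw [hunif a, bayesLE_uniform_iff b.val.2.1 a.val.maximizers_nonempty, coe_subset]

/-- The order dual of the irreducibles of (Δⁿ, ⊑) is order isomorphic to the
nonempty subsets of {1,…,n} ordered by inclusion. -/
theorem irreducibles_classical (n : ℕ) (hn : 2 ≤ n) :
    ∃ f : {x : ClState n // x ∈ Irr clLE} → {s : Set (Fin n) // s.Nonempty},
      Function.Bijective f ∧
      ∀ a b : {x : ClState n // x ∈ Irr clLE},
        clLE b.val a.val ↔ (f a).val ⊆ (f b).val :=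
  irreducibles_classical_general n
end

section
/- For every n ≥ 2, Shannon entropy μ, regarded as a map from (Δⁿ, ⊑) to [0,∞)*, is a measurement: (i) it is Scott continuous (x ⊑ y implies μy ≤ μx, and μ(⊔S) = inf μ(S) for every directed S ⊆ Δⁿ); (ii) μx = 0 if and only if x is a maximal element of (Δⁿ, ⊑) (i.e. a pure state); (iii) μ measures the content of every pure state: for every pure x ∈ Δⁿ and every Scott-open U ⊆ Δⁿ with x ∈ U there is ε > 0 such that {y ∈ Δⁿ : y ⊑ x and μy < ε} ⊆ U. -/
/-- `a` is the supremum (least upper bound) of `S` with respect to `le`. -/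
def IsLub' {α : Type*} (le : α → α → Prop) (S : Set α) (a : α) : Prop :=
  (∀ s ∈ S, le s a) ∧ ∀ b, (∀ s ∈ S, le s b) → le a b

/-- `U` is Scott open: an upper set inaccessible by directed suprema. -/
def ScottOpen {α : Type*} (le : α → α → Prop) (U : Set α) : Prop :=
  (∀ x ∈ U, ∀ y, le x y → y ∈ U) ∧
  ∀ S : Set α, S.Nonempty → DirectedOn le S →
    ∀ a, IsLub' le S a → a ∈ U → (S ∩ U).Nonempty

/-- Shannon entropy (with the convention 0 · ln 0 = 0, as `Real.log 0 = 0`). -/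
noncomputable def shannonEntropy {n : ℕ} (x : ClState n) : ℝ :=
  -∑ i, x.val i * Real.log (x.val i)

/-!
The Bayesian order has a permutation-free description: `x ⊑ y` iff `x i * y j ≤ x j * y i`
whenever `x j < x i` or `y j < y i`. It makes transitivity and the closedness of upper sets
elementary. If `x ⊑ y`, then `y / x` and `log x` are similarly ordered on the support of `x`, so
Chebyshev's sum inequality gives `∑ x log x ≤ ∑ y log x`, and Gibbs' inequality gives
`∑ y log x ≤ ∑ y log y`: entropy is antitone. Scott continuity then follows from compactness of
the simplex. A pure state is the supremum of the chain of states `peak j d` as `d → 0`, and a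
state below it with small entropy has its top coordinate close to `1`, hence lies above a given
member of the chain.
-/

open Finset Real

/-- Permutation-free form of `bayesLE` (see `bayesLE_iff`). -/
def BayesPairwise {ι : Type*} (x y : ι → ℝ) : Prop :=
  ∀ i j, (x j < x i ∨ y j < y i) → x i * y j ≤ x j * y i

namespace BayesPairwise

variable {ι : Type*} {x y z : ι → ℝ}

theorem refl (x : ι → ℝ) : BayesPairwise x x := fun _ _ _ => (mul_comm _ _).le

theorem eq_zero_of_eq_zero (h : BayesPairwise x y) (hy : ∀ i, 0 ≤ y i) {k : ι} (hk : 0 < x k)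
    {i : ι} (hi : x i = 0) : y i = 0 := by
  have := h k i (Or.inl (hi ▸ hk))
  rw [hi, zero_mul] at this
  exact le_antisymm (nonpos_of_mul_nonpos_right this hk) (hy i)

theorem monovary (h : BayesPairwise x y) (hx : ∀ i, 0 ≤ x i) (hy : ∀ i, 0 ≤ y i) :
    Monovary x y := by
  intro j i hij
  by_contra! hji
  have h₁ := h i j (Or.inr hij)
  have h₂ := h j i (Or.inl hji)
  nlinarith [mul_nonneg (sub_nonneg.2 hji.le) (hy j),
    mul_pos ((hx i).trans_lt hji) (sub_pos.2 hij)]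

theorem trans (hxy : BayesPairwise x y) (hyz : BayesPairwise y z) (hx : ∀ i, 0 ≤ x i)
    (hy : ∀ i, 0 ≤ y i) (hz : ∀ i, 0 ≤ z i) {k : ι} (hk : 0 < y k) : BayesPairwise x z := by
  intro i j hij
  rcases le_or_gt (x i) (x j) with hx_le | hx_lt
  · have hz_lt : z j < z i := hij.resolve_left hx_le.not_gt
    nlinarith [mul_le_mul_of_nonneg_right hx_le (hz j),
      mul_le_mul_of_nonneg_left hz_lt.le (hx j)]
  have hxy_ij := hxy i j (Or.inl hx_lt)
  rcases (hy j).eq_or_lt with hyj | hyj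
  · rw [hyz.eq_zero_of_eq_zero hz hk hyj.symm, mul_zero]
    exact mul_nonneg (hx j) (hz i)
  have hxj : 0 < x j := by
    by_contra! hxj
    nlinarith [mul_pos ((hx j).trans_lt hx_lt) hyj, hx j, hy i]
  have hy_lt : y j < y i := by
    by_contra! hyi
    nlinarith [mul_lt_mul_of_pos_right hx_lt hyj, mul_le_mul_of_nonneg_left hyi hxj.le]
  have hyz_ij := hyz i j (Or.inl hy_lt)
  have hyy : 0 < y i * y j := mul_pos (hyj.trans hy_lt) hyj
  refine le_of_mul_le_mul_right ?_ hyy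
  calc x i * z j * (y i * y j) = x i * y j * (y i * z j) := by ring
    _ ≤ x j * y i * (y i * z j) := mul_le_mul_of_nonneg_right hxy_ij (mul_nonneg (hy i) (hz j))
    _ ≤ x j * y i * (y j * z i) := mul_le_mul_of_nonneg_left hyz_ij (mul_nonneg (hx j) (hy i))
    _ = x j * z i * (y i * y j) := by ring

end BayesPairwise

section SortedForm

variable {n : ℕ}

theorem cross_le_of_adjacent {a b : Fin n → ℝ} (ha : ∀ p, 0 ≤ a p) (hb : ∀ p, 0 ≤ b p)
    (hb_anti : Antitone b) (hadj : ∀ p q : Fin n, (p : ℕ) + 1 = q → a p * b q ≤ a q * b p)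
    {p q : Fin n} (hpq : p ≤ q) : a p * b q ≤ a q * b p := by
  obtain ⟨d, hd⟩ := Nat.exists_eq_add_of_le (Fin.le_def.1 hpq)
  induction d generalizing q with
  | zero => rw [Fin.ext (hd.trans (add_zero _))]
  | succ d ih =>
    let r : Fin n := ⟨p + d, by omega⟩
    have h_pr := ih (q := r) (Fin.le_def.2 (Nat.le_add_right _ _)) rfl
    have h_rq := hadj r q (by simp only [r]; omega)
    have hb_qr : b q ≤ b r := hb_anti (Fin.le_def.2 (by simp only [r]; omega))
    rcases (hb r).eq_or_lt with hbr | hbr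
    · rw [le_antisymm (hbr ▸ hb_qr) (hb q), mul_zero]
      exact mul_nonneg (ha q) (hb p)
    rcases (ha r).eq_or_lt with har | har
    · rw [← har, zero_mul] at h_pr
      have hap : a p = 0 := le_antisymm (nonpos_of_mul_nonpos_left h_pr hbr) (ha p)
      rw [hap, zero_mul]
      exact mul_nonneg (ha q) (hb p)
    refine le_of_mul_le_mul_right ?_ (mul_pos har hbr)
    calc a p * b q * (a r * b r) = a p * b r * (a r * b q) := by ring
      _ ≤ a r * b p * (a q * b r) :=
          mul_le_mul h_pr h_rq (mul_nonneg (ha r) (hb q)) (mul_nonneg (ha r) (hb p))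
      _ = a q * b p * (a r * b r) := by ring

theorem bayesLE_iff {x y : Fin n → ℝ} (hx : ∀ i, 0 ≤ x i) (hy : ∀ i, 0 ≤ y i) :
    bayesLE x y ↔ BayesPairwise x y := by
  constructor
  · rintro ⟨σ, hxσ, hyσ, hadj⟩ i j hij
    have hpos : σ.symm i < σ.symm j := by
      by_contra! hle
      rcases hij with h | h
      · exact h.not_ge (by simpa using hxσ hle)
      · exact h.not_ge (by simpa using hyσ hle)
    simpa using cross_le_of_adjacent (fun _ => hx _) (fun _ => hy _) hyσ hadj hpos.le
  · intro h
    let σ := Tuple.sort fun i => OrderDual.toDual (toLex (y i, x i))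
    have hσ : ∀ ⦃p q⦄, p ≤ q → y (σ q) < y (σ p) ∨ y (σ q) = y (σ p) ∧ x (σ q) ≤ x (σ p) :=
      fun p q hpq => Prod.Lex.toLex_le_toLex.1 (OrderDual.toDual_le_toDual.1 (Tuple.monotone_sort
        (fun i => OrderDual.toDual (toLex (y i, x i))) hpq :))
    have hy_anti : Antitone fun p => y (σ p) := fun p q hpq => by
      rcases hσ hpq with h' | h'
      exacts [h'.le, h'.1.le]
    refine ⟨σ, fun p q hpq => ?_, hy_anti, fun p q hpq => ?_⟩
    · rcases hσ hpq with h' | h'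
      exacts [h.monovary hx hy h', h'.2]
    · have hle : p ≤ q := Fin.le_def.2 (by omega)
      rcases (hσ hle) with hlt | ⟨heq, hx_le⟩
      · exact h _ _ (Or.inr hlt)
      rcases hx_le.lt_or_eq with hlt | heq'
      · exact h _ _ (Or.inl hlt)
      · rw [heq, heq', mul_comm]

end SortedForm

section Entropy

variable {ι : Type*} [Fintype ι] {x y : ι → ℝ}

theorem exists_pos_of_mem_stdSimplex (hx : x ∈ stdSimplex ℝ ι) : ∃ k, 0 < x k := by
  by_contra! h
  have : ∑ i, x i = 0 := sum_eq_zero fun i _ => le_antisymm (h i) (hx.1 i)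
  linarith [hx.2]

theorem sum_mul_log_le_sum_mul_log_self (hx : x ∈ stdSimplex ℝ ι) (hy : y ∈ stdSimplex ℝ ι)
    (hsupp : ∀ i, x i = 0 → y i = 0) : ∑ i, y i * log (x i) ≤ ∑ i, y i * log (y i) := by
  have hterm : ∀ i, y i * log (x i) ≤ y i * log (y i) + (x i - y i) := fun i => by
    rcases (hy.1 i).eq_or_lt with hyi | hyi
    · simp [← hyi, hx.1 i]
    have hxi : 0 < x i := (hx.1 i).lt_of_ne fun h => hyi.ne' (hsupp i h.symm)
    have := mul_le_mul_of_nonneg_left (log_le_sub_one_of_pos (div_pos hxi hyi)) hyi.le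
    rw [log_div hxi.ne' hyi.ne', mul_sub, mul_sub, mul_div_cancel₀ _ hyi.ne'] at this
    linarith
  calc ∑ i, y i * log (x i) ≤ ∑ i, (y i * log (y i) + (x i - y i)) :=
        sum_le_sum fun i _ => hterm i
    _ = ∑ i, y i * log (y i) := by
        rw [sum_add_distrib, sum_sub_distrib, hx.2, hy.2, sub_self, add_zero]

/-- Chebyshev's sum inequality, with weights `x`, for the similarly ordered `y / x` and `log x`. -/
theorem BayesPairwise.sum_mul_log_le (h : BayesPairwise x y) (hx : x ∈ stdSimplex ℝ ι)
    (hy : y ∈ stdSimplex ℝ ι) : ∑ i, x i * log (x i) ≤ ∑ i, y i * log (x i) := by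
  obtain ⟨k, hk⟩ := exists_pos_of_mem_stdSimplex hx
  have hterm : ∀ i j, x j ≤ x i → 0 ≤ (y i * x j - x i * y j) * (log (x i) - log (x j)) := by
    intro i j hji
    rcases hji.lt_or_eq with hlt | heq
    · rcases (hx.1 j).eq_or_lt with hxj | hxj
      · simp [← hxj, h.eq_zero_of_eq_zero hy.1 hk hxj.symm]
      exact mul_nonneg (by linarith [h i j (Or.inl hlt)]) (sub_nonneg.2 (log_le_log hxj hji))
    · simp [heq]
  have hpair : ∀ i j, 0 ≤ (y i * x j - x i * y j) * (log (x i) - log (x j)) := by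
    intro i j
    rcases le_total (x j) (x i) with hji | hij
    · exact hterm i j hji
    · linarith [hterm j i hij]
  have hsum : ∑ i, ∑ j, (y i * x j - x i * y j) * (log (x i) - log (x j)) =
      2 * (∑ i, y i * log (x i) - ∑ i, x i * log (x i)) := by
    have hexpand : ∀ i j, (y i * x j - x i * y j) * (log (x i) - log (x j)) =
        y i * log (x i) * x j - x i * log (x i) * y j - y i * (x j * log (x j))
          + x i * (y j * log (x j)) := fun i j => by ring
    simp only [hexpand, sum_add_distrib, sum_sub_distrib, ← mul_sum, ← sum_mul, hx.2, hy.2]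
    ring
  linarith [sum_nonneg fun i (_ : i ∈ univ) => sum_nonneg fun j (_ : j ∈ univ) => hpair i j]

theorem BayesPairwise.sum_negMulLog_le (h : BayesPairwise x y) (hx : x ∈ stdSimplex ℝ ι)
    (hy : y ∈ stdSimplex ℝ ι) : ∑ i, negMulLog (y i) ≤ ∑ i, negMulLog (x i) := by
  obtain ⟨k, hk⟩ := exists_pos_of_mem_stdSimplex hx
  have := (h.sum_mul_log_le hx hy).trans
    (sum_mul_log_le_sum_mul_log_self hx hy fun i => h.eq_zero_of_eq_zero hy.1 hk)
  simpa [negMulLog, sum_neg_distrib] using this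

theorem neg_log_le_sum_negMulLog (hy : y ∈ stdSimplex ℝ ι) (hy_max : ∀ i, y i ≤ y j) :
    -log (y j) ≤ ∑ i, negMulLog (y i) := by
  calc -log (y j) = ∑ i, y i * -log (y j) := by rw [← sum_mul, hy.2, one_mul]
    _ ≤ ∑ i, negMulLog (y i) := sum_le_sum fun i _ => by
      rw [negMulLog, neg_mul, mul_neg, neg_le_neg_iff]
      rcases (hy.1 i).eq_or_lt with hyi | hyi
      · simp [← hyi]
      · exact mul_le_mul_of_nonneg_left (log_le_log hyi (hy_max i)) hyi.le

end Entropy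

theorem isClosed_setOf_bayesPairwise {ι : Type*} (s : ι → ℝ) :
    IsClosed {v : ι → ℝ | BayesPairwise s v} := by
  simp only [BayesPairwise, Set.ofPred_forall]
  refine isClosed_iInter fun i => isClosed_iInter fun j => isClosed_imp ?_ ?_
  · exact isOpen_const.union (isOpen_lt (continuous_apply j) (continuous_apply i))
  · exact isClosed_le (by fun_prop) (by fun_prop)

section Pure

variable {ι : Type*} [DecidableEq ι] {v y : ι → ℝ} {j : ι}

theorem bayesPairwise_single_iff (hy : ∀ i, 0 ≤ y i) :
    BayesPairwise y (Pi.single j 1) ↔ ∀ i, y i ≤ y j := by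
  constructor
  · intro h i
    by_contra! hji
    have hij : i ≠ j := by rintro rfl; exact hji.false
    have := h i j (Or.inl hji)
    simp only [Pi.single_eq_same, Pi.single_eq_of_ne hij, mul_one, mul_zero] at this
    linarith [hy j]
  · intro hmax i k hik
    by_cases hk : k = j
    · subst hk
      by_cases hi : i = k
      · subst hi; rfl
      · simp only [Pi.single_eq_same, Pi.single_eq_of_ne hi, mul_one, mul_zero] at hik ⊢
        linarith [hmax i, hik.resolve_right (by norm_num)]
    · simp only [Pi.single_apply, hk, if_false, mul_zero]
      exact mul_nonneg (hy k) (by split_ifs <;> norm_num)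

variable [Fintype ι]

theorem eq_single_of_forall_ne (hv : v ∈ stdSimplex ℝ ι) (h : ∀ i ≠ j, v i = 0) :
    v = Pi.single j 1 := by
  have hj : v j = 1 := by rw [← hv.2, Fintype.sum_eq_single j h]
  funext i
  by_cases hi : i = j
  · subst hi; simp [hj]
  · simp [hi, h i hi]

theorem eq_single_of_apply_eq_one (hv : v ∈ stdSimplex ℝ ι) (hj : v j = 1) :
    v = Pi.single j 1 :=
  eq_single_of_forall_ne hv fun i hi => le_antisymm
    (by linarith [add_le_sum (fun k _ => hv.1 k) (mem_univ i) (mem_univ j) hi, hv.2]) (hv.1 i)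

theorem BayesPairwise.eq_single (h : BayesPairwise (Pi.single j 1) y) (hy : y ∈ stdSimplex ℝ ι) :
    y = Pi.single j 1 :=
  eq_single_of_forall_ne hy fun i hi => by
    have := h j i (Or.inl (by simp [hi]))
    simp only [Pi.single_eq_same, Pi.single_apply, hi, if_false, one_mul, zero_mul] at this
    exact le_antisymm this (hy.1 i)

end Pure

section Peak

variable {ι : Type*} [Fintype ι] [DecidableEq ι] {y : ι → ℝ} {j : ι} {d : ℝ}

def peak (j : ι) (d : ℝ) : ι → ℝ :=
  fun i => if i = j then 1 - (Fintype.card ι - 1) * d else d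

theorem peak_le_peak_self (hdc : Fintype.card ι * d ≤ 1) (i : ι) : peak j d i ≤ peak j d j := by
  by_cases hi : i = j
  · rw [hi]
  · simp only [peak, hi, if_true, if_false]
    linarith

theorem peak_mem_stdSimplex (hd : 0 ≤ d) (hdc : Fintype.card ι * d ≤ 1) :
    peak j d ∈ stdSimplex ℝ ι := by
  have hsplit : ∀ i, peak j d i = d + if i = j then 1 - Fintype.card ι * d else 0 := fun i => by
    unfold peak; split_ifs <;> ring
  refine ⟨fun i => ?_, ?_⟩
  · rw [hsplit]
    split_ifs <;> linarith
  · simp only [hsplit, sum_add_distrib, sum_const, card_univ, nsmul_eq_mul, sum_ite_eq',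
      mem_univ, if_true]
    ring

theorem bayesPairwise_peak (hd : 0 ≤ d) (hdc : Fintype.card ι * d ≤ 1) (hy_max : ∀ i, y i ≤ y j)
    (hcross : ∀ i ≠ j, (1 - (Fintype.card ι - 1) * d) * y i ≤ d * y j) :
    BayesPairwise (peak j d) y := by
  intro i k hik
  by_cases hi : i = j <;> by_cases hk : k = j
  · rw [hi, hk]
  · simp only [peak, hi, hk, if_true, if_false]
    exact hcross k hk
  · subst hk
    simp only [peak, hi, if_true, if_false] at hik
    exfalso
    rcases hik with h | h
    · linarith
    · exact h.not_ge (hy_max i)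
  · simp only [peak, hi, hk, if_false, lt_self_iff_false, false_or] at hik ⊢
    exact mul_le_mul_of_nonneg_left hik.le hd

theorem bayesPairwise_peak_peak {d' : ℝ} (hd' : 0 ≤ d') (hd'd : d' ≤ d)
    (hdc : Fintype.card ι * d ≤ 1) : BayesPairwise (peak j d) (peak j d') := by
  have hd'c : Fintype.card ι * d' ≤ 1 := by nlinarith [(Fintype.card ι).cast_nonneg (α := ℝ)]
  refine bayesPairwise_peak (hd'.trans hd'd) hdc (peak_le_peak_self hd'c) fun i hi => ?_
  simp only [peak, hi, if_true, if_false]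
  nlinarith

theorem eq_single_of_forall_bayesPairwise_peak {b : ι → ℝ} (hb : b ∈ stdSimplex ℝ ι)
    (h : ∀ d : ℝ, 0 < d → Fintype.card ι * d < 1 → BayesPairwise (peak j d) b) :
    b = Pi.single j 1 := by
  refine eq_single_of_forall_ne hb fun i hi => le_antisymm (not_lt.1 fun hbi => ?_) (hb.1 i)
  set c : ℝ := (Fintype.card ι : ℝ)
  have hc : 1 ≤ c := Nat.one_le_cast.2 (Fintype.card_pos_iff.2 ⟨j⟩)
  set d := b i / (4 * c)
  have hcd : c * d = b i / 4 := by simp only [d]; field_simp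
  have hbj := (mem_Icc_of_mem_stdSimplex hb j).2
  have hbi1 := (mem_Icc_of_mem_stdSimplex hb i).2
  have hcross := h d (by positivity) (by linarith) j i (Or.inl ?_)
  · simp only [peak, hi, if_true, if_false] at hcross
    have hd0 : 0 ≤ d := by positivity
    have hdle : d ≤ b i / 4 := hcd ▸ le_mul_of_one_le_left hd0 hc
    have hfac : 3 / 4 ≤ 1 - (c - 1) * d := by nlinarith
    nlinarith [mul_le_mul_of_nonneg_right hfac hbi.le, mul_le_of_le_one_right hd0 hbj]
  · simp only [peak, hi, if_true, if_false]
    linarith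

theorem exists_pos_bayesPairwise_peak (hd : 0 < d) (hdc : Fintype.card ι * d < 1) :
    ∃ ε > 0, ∀ y ∈ stdSimplex ℝ ι, (∀ i, y i ≤ y j) → ∑ i, negMulLog (y i) < ε →
      BayesPairwise (peak j d) y := by
  set a := 1 - (Fintype.card ι - 1) * d
  have ha : d < a := by simp only [a]; linarith
  refine ⟨log ((a + d) / a), log_pos ((one_lt_div (by linarith)).2 (by linarith)),
    fun y hy hy_max hμ => bayesPairwise_peak hd.le hdc.le hy_max fun i hi => ?_⟩
  obtain ⟨k, hk⟩ := exists_pos_of_mem_stdSimplex hy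
  have hyj : 0 < y j := hk.trans_le (hy_max k)
  have hlog : log (a / (a + d)) < log (y j) := by
    rw [← inv_div, log_inv]
    linarith [neg_log_le_sum_negMulLog hy hy_max]
  have hlt : a < (a + d) * y j := (div_lt_iff₀' (by linarith)).1
    ((log_lt_log_iff (div_pos (by linarith) (by linarith)) hyj).1 hlog)
  have hsum := add_le_sum (fun k _ => hy.1 k) (mem_univ i) (mem_univ j) hi
  nlinarith [hy.2]

end Peak

namespace ClState

variable {n : ℕ}

theorem mem_stdSimplex (x : ClState n) : x.val ∈ stdSimplex ℝ (Fin n) := x.2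

theorem clLE_iff {x y : ClState n} : clLE x y ↔ BayesPairwise x.val y.val :=
  bayesLE_iff x.2.1 y.2.1

theorem clLE_refl (x : ClState n) : clLE x x := clLE_iff.2 (BayesPairwise.refl _)

theorem clLE_trans {x y z : ClState n} (hxy : clLE x y) (hyz : clLE y z) : clLE x z :=
  have ⟨_, hk⟩ := exists_pos_of_mem_stdSimplex y.mem_stdSimplex
  clLE_iff.2 ((clLE_iff.1 hxy).trans (clLE_iff.1 hyz) x.2.1 y.2.1 z.2.1 hk)

theorem shannonEntropy_eq_sum_negMulLog (x : ClState n) :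
    shannonEntropy x = ∑ i, negMulLog (x.val i) := by
  simp [shannonEntropy, negMulLog, sum_neg_distrib]

theorem shannonEntropy_le_of_clLE {x y : ClState n} (h : clLE x y) :
    shannonEntropy y ≤ shannonEntropy x := by
  simpa only [shannonEntropy_eq_sum_negMulLog] using
    (clLE_iff.1 h).sum_negMulLog_le x.mem_stdSimplex y.mem_stdSimplex

/-- Compactness: the closed sets `{p | s ⊑ p ∧ m ≤ μ p}`, `s ∈ S`, form a directed family. -/
theorem exists_upperBound_le_shannonEntropy {S : Set (ClState n)} (hS : S.Nonempty)
    (hdir : DirectedOn clLE S) {m : ℝ} (hm : ∀ s ∈ S, m ≤ shannonEntropy s) :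
    ∃ p : ClState n, (∀ s ∈ S, clLE s p) ∧ m ≤ shannonEntropy p := by
  have : Nonempty S := hS.to_subtype
  let K : S → Set (Fin n → ℝ) := fun s =>
    {v | v ∈ stdSimplex ℝ (Fin n) ∧ BayesPairwise s.1.val v ∧ m ≤ ∑ i, negMulLog (v i)}
  have hK_closed : ∀ s, IsClosed (K s) := fun s =>
    (isClosed_stdSimplex ℝ (Fin n)).inter ((isClosed_setOf_bayesPairwise _).inter
      (isClosed_le continuous_const
        (continuous_finsetSum _ fun i _ => continuous_negMulLog.comp (continuous_apply i))))
  have hK_dir : Directed (· ⊇ ·) K := by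
    rintro ⟨s₁, hs₁⟩ ⟨s₂, hs₂⟩
    obtain ⟨s, hs, h₁, h₂⟩ := hdir s₁ hs₁ s₂ hs₂
    refine ⟨⟨s, hs⟩, ?_, ?_⟩ <;> rintro v ⟨hv, hsv, hmv⟩
    · exact ⟨hv, clLE_iff.1 (clLE_trans h₁ ((clLE_iff (y := ⟨v, hv⟩)).2 hsv)), hmv⟩
    · exact ⟨hv, clLE_iff.1 (clLE_trans h₂ ((clLE_iff (y := ⟨v, hv⟩)).2 hsv)), hmv⟩
  have hK_ne : ∀ s, (K s).Nonempty := fun s =>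
    ⟨s.1.val, s.1.mem_stdSimplex, BayesPairwise.refl _,
      shannonEntropy_eq_sum_negMulLog s.1 ▸ hm s.1 s.2⟩
  have hK_compact : ∀ s, IsCompact (K s) := fun s =>
    (isCompact_stdSimplex ℝ (Fin n)).of_isClosed_subset (hK_closed s) fun _ h => h.1
  obtain ⟨v, hv⟩ := IsCompact.nonempty_iInter_of_directed_nonempty_isCompact_isClosed K hK_dir
    hK_ne hK_compact hK_closed
  obtain ⟨s₀, hs₀⟩ := hS
  have hv₀ := Set.mem_iInter.1 hv ⟨s₀, hs₀⟩
  refine ⟨⟨v, hv₀.1⟩, fun s hs => clLE_iff.2 (Set.mem_iInter.1 hv ⟨s, hs⟩).2.1, ?_⟩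
  exact hv₀.2.2.trans_eq (shannonEntropy_eq_sum_negMulLog ⟨v, hv₀.1⟩).symm

theorem shannonEntropy_eq_sInf_of_isLub {S : Set (ClState n)} (hS : S.Nonempty)
    (hdir : DirectedOn clLE S) {a : ClState n} (ha : IsLub' clLE S a) :
    shannonEntropy a = sInf (shannonEntropy '' S) := by
  have hlow : ∀ s ∈ S, shannonEntropy a ≤ shannonEntropy s := fun s hs =>
    shannonEntropy_le_of_clLE (ha.1 s hs)
  have hbdd : BddBelow (shannonEntropy '' S) := ⟨_, Set.forall_mem_image.2 hlow⟩
  obtain ⟨p, hp, hmp⟩ := exists_upperBound_le_shannonEntropy hS hdir fun s hs =>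
    csInf_le hbdd (Set.mem_image_of_mem _ hs)
  exact le_antisymm (le_csInf (hS.image _) (Set.forall_mem_image.2 hlow))
    (hmp.trans (shannonEntropy_le_of_clLE (ha.2 p hp)))

theorem shannonEntropy_eq_zero_iff (x : ClState n) :
    shannonEntropy x = 0 ↔ ∃ j, x.val j = 1 := by
  rw [shannonEntropy_eq_sum_negMulLog]
  constructor
  · intro h
    obtain ⟨k, hk⟩ := exists_pos_of_mem_stdSimplex x.mem_stdSimplex
    have hle := mem_Icc_of_mem_stdSimplex x.mem_stdSimplex
    refine ⟨k, (hle k).2.eq_or_lt.resolve_right fun hk1 => ?_⟩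
    have hpos : 0 < negMulLog (x.val k) := by
      rw [negMulLog, neg_mul, neg_pos]
      exact mul_neg_of_pos_of_neg hk (log_neg hk hk1)
    have := single_le_sum (fun i _ => negMulLog_nonneg (hle i).1 (hle i).2) (mem_univ k)
    linarith
  · rintro ⟨j, hj⟩
    rw [eq_single_of_apply_eq_one x.mem_stdSimplex hj]
    refine sum_eq_zero fun i _ => ?_
    by_cases hi : i = j <;> simp [hi]

theorem maximal_iff_exists_eq_one (x : ClState n) :
    (∀ y, clLE x y → y = x) ↔ ∃ j, x.val j = 1 := by
  constructor
  · intro hmax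
    have : Nonempty (Fin n) := ⟨(exists_pos_of_mem_stdSimplex x.mem_stdSimplex).choose⟩
    obtain ⟨j, hj⟩ := Finite.exists_max x.val
    let e : ClState n := ⟨Pi.single j 1, single_mem_stdSimplex ℝ j⟩
    refine ⟨j, ?_⟩
    rw [← hmax e (clLE_iff.2 ((bayesPairwise_single_iff x.2.1).2 hj))]
    simp [e]
  · rintro ⟨j, hj⟩ y hxy
    have hx := eq_single_of_apply_eq_one x.mem_stdSimplex hj
    rw [clLE_iff, hx] at hxy
    exact Subtype.ext ((hxy.eq_single y.mem_stdSimplex).trans hx.symm)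

def peakChain (j : Fin n) : Set (ClState n) :=
  {s | ∃ d : ℝ, 0 < d ∧ Fintype.card (Fin n) * d < 1 ∧ s.val = peak j d}

theorem peakChain_nonempty (j : Fin n) : (peakChain j).Nonempty := by
  have hn : (0 : ℝ) < Fintype.card (Fin n) := Nat.cast_pos.2 (Fintype.card_pos_iff.2 ⟨j⟩)
  set d : ℝ := 1 / (2 * Fintype.card (Fin n))
  have hd : 0 < d := by positivity
  have hdn : Fintype.card (Fin n) * d < 1 := by
    simp only [d]; rw [mul_one_div, div_lt_one (by positivity)]; linarith
  exact ⟨⟨peak j d, peak_mem_stdSimplex hd.le hdn.le⟩, d, hd, hdn, rfl⟩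

theorem directedOn_peakChain (j : Fin n) : DirectedOn clLE (peakChain j) := by
  rintro s ⟨d, hd, hdn, hs⟩ t ⟨e, he, hen, ht⟩
  have hm : Fintype.card (Fin n) * min d e < 1 :=
    (mul_le_mul_of_nonneg_left (min_le_left d e) (Nat.cast_nonneg _)).trans_lt hdn
  refine ⟨⟨peak j (min d e), peak_mem_stdSimplex (le_min hd.le he.le) hm.le⟩,
    ⟨_, lt_min hd he, hm, rfl⟩, clLE_iff.2 ?_, clLE_iff.2 ?_⟩
  · rw [hs]; exact bayesPairwise_peak_peak (le_min hd.le he.le) (min_le_left d e) hdn.le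
  · rw [ht]; exact bayesPairwise_peak_peak (le_min hd.le he.le) (min_le_right d e) hen.le

theorem isLub_peakChain {x : ClState n} {j : Fin n} (hx : x.val = Pi.single j 1) :
    IsLub' clLE (peakChain j) x := by
  refine ⟨?_, fun b hb => ?_⟩
  · rintro s ⟨d, hd, hdn, hs⟩
    rw [clLE_iff, hs, hx, bayesPairwise_single_iff (peak_mem_stdSimplex hd.le hdn.le).1]
    exact peak_le_peak_self hdn.le
  · have hbx : b.val = x.val := (eq_single_of_forall_bayesPairwise_peak b.mem_stdSimplex
      fun d hd hdn => clLE_iff.1 (hb ⟨peak j d, peak_mem_stdSimplex hd.le hdn.le⟩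
        ⟨d, hd, hdn, rfl⟩)).trans hx.symm
    exact Subtype.ext hbx ▸ clLE_refl x

/-- A Scott open set containing the pure state at `j` contains some `peak j d`, hence every state
above it; these include all states below the pure state with small enough entropy. -/
theorem exists_pos_subset_of_scottOpen {x : ClState n} {j : Fin n} (hj : x.val j = 1)
    {U : Set (ClState n)} (hU : ScottOpen clLE U) (hxU : x ∈ U) :
    ∃ ε > (0 : ℝ), {y : ClState n | clLE y x ∧ shannonEntropy y < ε} ⊆ U := by
  have hx := eq_single_of_apply_eq_one x.mem_stdSimplex hj
  obtain ⟨s, ⟨d, hd, hdn, hs⟩, hsU⟩ :=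
    hU.2 _ (peakChain_nonempty j) (directedOn_peakChain j) x (isLub_peakChain hx) hxU
  obtain ⟨ε, hε, hpeak⟩ := exists_pos_bayesPairwise_peak (j := j) hd hdn
  refine ⟨ε, hε, fun y ⟨hyx, hyε⟩ => hU.1 s hsU y ?_⟩
  rw [clLE_iff, hx, bayesPairwise_single_iff y.2.1] at hyx
  rw [clLE_iff, hs]
  exact hpeak y.val y.mem_stdSimplex hyx (shannonEntropy_eq_sum_negMulLog y ▸ hyε)

end ClState

theorem shannon_entropy_measurement_general (n : ℕ) :
    (∀ x y : ClState n, clLE x y → shannonEntropy y ≤ shannonEntropy x) ∧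
    (∀ S : Set (ClState n), S.Nonempty → DirectedOn clLE S →
      ∀ a : ClState n, IsLub' clLE S a →
        shannonEntropy a = sInf (shannonEntropy '' S)) ∧
    (∀ x : ClState n, shannonEntropy x = 0 ↔ (∀ y, clLE x y → y = x)) ∧
    (∀ x : ClState n, (∃ i, x.val i = 1) →
      ∀ U : Set (ClState n), ScottOpen clLE U → x ∈ U →
        ∃ ε > (0 : ℝ), {y : ClState n | clLE y x ∧ shannonEntropy y < ε} ⊆ U) :=
  ⟨fun _ _ => ClState.shannonEntropy_le_of_clLE,
    fun _ hS hdir _ => ClState.shannonEntropy_eq_sInf_of_isLub hS hdir,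
    fun x => (ClState.shannonEntropy_eq_zero_iff x).trans
      (ClState.maximal_iff_exists_eq_one x).symm,
    fun _ ⟨_, hj⟩ _ hU hxU => ClState.exists_pos_subset_of_scottOpen hj hU hxU⟩

/-- Shannon entropy is a measurement Δⁿ → [0,∞)*: Scott continuous, its kernel is
exactly the maximal (pure) states, and it measures the content of every pure state. -/
theorem shannon_entropy_measurement (n : ℕ) (hn : 2 ≤ n) :
    (∀ x y : ClState n, clLE x y → shannonEntropy y ≤ shannonEntropy x) ∧
    (∀ S : Set (ClState n), S.Nonempty → DirectedOn clLE S →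
      ∀ a : ClState n, IsLub' clLE S a →
        shannonEntropy a = sInf (shannonEntropy '' S)) ∧
    (∀ x : ClState n, shannonEntropy x = 0 ↔ (∀ y, clLE x y → y = x)) ∧
    (∀ x : ClState n, (∃ i, x.val i = 1) →
      ∀ U : Set (ClState n), ScottOpen clLE U → x ∈ U →
        ∃ ε > (0 : ℝ), {y : ClState n | clLE y x ∧ shannonEntropy y < ε} ⊆ U) :=
  shannon_entropy_measurement_general n
end

section
/- For all n, m ≥ 2, there is no order embedding φ : (Ωⁿ, ⊑) → (Δᵐ, ⊑) (ρ ⊑ τ iff φ(ρ) ⊑ φ(τ)) such that μ(φ(ρ)) = σ(ρ) for all ρ ∈ Ωⁿ, where μ is Shannon entropy and σ is von Neumann entropy. -/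
open scoped ComplexOrder Matrix

/-- Ωⁿ : density matrices on ℂⁿ. -/
def IsDensityMatrix (n : ℕ) (ρ : Matrix (Fin n) (Fin n) ℂ) : Prop :=
  ρ.PosSemidef ∧ ρ.trace = 1

def QState (n : ℕ) := {ρ : Matrix (Fin n) (Fin n) ℂ // IsDensityMatrix n ρ}

/-- The spectral order on density matrices. -/
def specLE {n : ℕ} (ρ σ : Matrix (Fin n) (Fin n) ℂ) : Prop :=
  ∃ U : Matrix (Fin n) (Fin n) ℂ, U ∈ Matrix.unitaryGroup (Fin n) ℂ ∧
    (Uᴴ * ρ * U).IsDiag ∧ (Uᴴ * σ * U).IsDiag ∧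
    bayesLE (fun i => ((Uᴴ * ρ * U) i i).re) (fun i => ((Uᴴ * σ * U) i i).re)

def qLE {n : ℕ} (ρ σ : QState n) : Prop := specLE ρ.val σ.val

/-- von Neumann entropy: −∑ λᵢ ln λᵢ, λᵢ the eigenvalues of ρ. -/
noncomputable def vnEntropy {n : ℕ} (ρ : QState n) : ℝ :=
  -∑ i, ρ.prop.1.1.eigenvalues i * Real.log (ρ.prop.1.1.eigenvalues i)

/-!
Pure states have von Neumann entropy `0`, while the only classical states of Shannon entropy `0`
are the `m` point masses. An entropy-preserving `φ` therefore sends the continuum of pure states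
`√t e₀ + √(1 - t) e₁`, `t ∈ [0, 1]`, to finitely many points, so two distinct ones `ρ ≠ τ` have
the same image. The Bayesian order is reflexive, so `ρ ⊑ τ` because `φ` is an order embedding.
But pure states comparable in the spectral order are equal: in a common eigenbasis both are
projections onto basis vectors, and sorting their diagonals decreasingly with the same
permutation forces the two basis vectors to coincide.
-/

open Matrix

section RankOne

variable {ι 𝕜 : Type*} [Fintype ι] [Field 𝕜] [StarRing 𝕜]

lemma isIdempotentElem_vecMulVec_star {v : ι → 𝕜} (hv : star v ⬝ᵥ v = 1) :
    IsIdempotentElem (vecMulVec v (star v)) := by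
  rw [IsIdempotentElem, vecMulVec_mul_vecMulVec, hv, one_smul]

lemma exists_vecMulVec_star_eq_single_of_isDiag [DecidableEq ι] {v : ι → 𝕜}
    (hv : star v ⬝ᵥ v = 1) (hdiag : (vecMulVec v (star v)).IsDiag) :
    ∃ k, vecMulVec v (star v) = single k k 1 := by
  obtain ⟨k, hk⟩ : ∃ k, v k ≠ 0 := by
    by_contra! h
    simp [show v = 0 from funext h] at hv
  have hzero : ∀ j, j ≠ k → v j = 0 := fun j hj => by
    simpa [vecMulVec_apply, hk] using hdiag hj.symm
  have hkk : star (v k) * v k = 1 := by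
    rwa [dotProduct, Finset.sum_eq_single k (fun j _ hj => by simp [hzero j hj]) (by simp)]
      at hv
  refine ⟨k, ?_⟩
  ext i j
  by_cases hi : i = k <;> by_cases hj : j = k <;>
    simp [vecMulVec_apply, hi, hj, hzero, mul_comm (v k), hkk, eq_comm (a := k)]

end RankOne

lemma apply_zero_eq_of_antitone_piSingle_comp {n : ℕ} [NeZero n] {σ : Equiv.Perm (Fin n)}
    {k : Fin n} (h : Antitone fun i => (Pi.single k 1 : Fin n → ℝ) (σ i)) : σ 0 = k := by
  by_contra hne
  have := h (Fin.zero_le (σ.symm k))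
  norm_num [hne] at this

lemma bayesLE_refl {n : ℕ} (x : Fin n → ℝ) : bayesLE x x := by
  refine ⟨Tuple.sort (fun i => -x i), ?_, ?_, fun i j _ => (mul_comm _ _).le⟩ <;>
  · intro i j hij
    simpa using Tuple.monotone_sort (fun i => -x i) hij

lemma vnEntropy_eq_zero_of_isIdempotentElem {n : ℕ} (ρ : QState n)
    (hρ : IsIdempotentElem ρ.val) : vnEntropy ρ = 0 := by
  have h01 (i : Fin n) : ρ.prop.1.1.eigenvalues i = 0 ∨ ρ.prop.1.1.eigenvalues i = 1 := by
    simpa using hρ.spectrum_subset ℝ (ρ.prop.1.1.eigenvalues_mem_spectrum_real i)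
  simp only [vnEntropy, neg_eq_zero]
  exact Finset.sum_eq_zero fun i _ => by rcases h01 i with h | h <;> simp [h]

def pureState {n : ℕ} (v : Fin n → ℂ) (hv : star v ⬝ᵥ v = 1) : QState n :=
  ⟨vecMulVec v (star v), posSemidef_vecMulVec_self_star v, by
    rw [trace_vecMulVec, dotProduct_comm, hv]⟩

lemma vnEntropy_pureState {n : ℕ} (v : Fin n → ℂ) (hv : star v ⬝ᵥ v = 1) :
    vnEntropy (pureState v hv) = 0 :=
  vnEntropy_eq_zero_of_isIdempotentElem _ (isIdempotentElem_vecMulVec_star hv)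

lemma vecMulVec_star_eq_of_specLE {n : ℕ} {v w : Fin n → ℂ} (hv : star v ⬝ᵥ v = 1)
    (hw : star w ⬝ᵥ w = 1) (h : specLE (vecMulVec v (star v)) (vecMulVec w (star w))) :
    vecMulVec v (star v) = vecMulVec w (star w) := by
  obtain ⟨U, hU, hdv, hdw, σ, hv_anti, hw_anti, -⟩ := h
  have hUUh : U * Uᴴ = 1 := Unitary.mul_star_self_of_mem hU
  have hconj (u : Fin n → ℂ) :
      Uᴴ * vecMulVec u (star u) * U = vecMulVec (Uᴴ *ᵥ u) (star (Uᴴ *ᵥ u)) := by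
    rw [mul_vecMulVec, vecMulVec_mul, star_mulVec, conjTranspose_conjTranspose]
  have hnorm (u : Fin n → ℂ) (hu : star u ⬝ᵥ u = 1) : star (Uᴴ *ᵥ u) ⬝ᵥ (Uᴴ *ᵥ u) = 1 := by
    rw [star_mulVec, conjTranspose_conjTranspose, ← dotProduct_mulVec, mulVec_mulVec, hUUh,
      one_mulVec, hu]
  have hcancel (A : Matrix (Fin n) (Fin n) ℂ) : U * (Uᴴ * A * U) * Uᴴ = A := by
    simp only [← Matrix.mul_assoc, hUUh, Matrix.one_mul]
    rw [Matrix.mul_assoc, hUUh, Matrix.mul_one]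
  have hdiag (j i : Fin n) : (single j j (1 : ℂ) i i).re = (Pi.single j 1 : Fin n → ℝ) i := by
    by_cases hi : i = j <;> simp [hi, eq_comm (a := j)]
  simp only [hconj] at hdv hdw hv_anti hw_anti
  obtain ⟨k, hk⟩ := exists_vecMulVec_star_eq_single_of_isDiag (hnorm v hv) hdv
  obtain ⟨l, hl⟩ := exists_vecMulVec_star_eq_single_of_isDiag (hnorm w hw) hdw
  have : NeZero n := NeZero.of_pos k.pos
  simp only [hk, hl, hdiag] at hv_anti hw_anti
  have hkl : k = l :=
    (apply_zero_eq_of_antitone_piSingle_comp hv_anti).symm.trans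
      (apply_zero_eq_of_antitone_piSingle_comp hw_anti)
  rw [← hcancel (vecMulVec v _), ← hcancel (vecMulVec w _), hconj, hconj, hk, hl, hkl]

namespace ClState

lemma apply_le_one {m : ℕ} (x : ClState m) (i : Fin m) : x.val i ≤ 1 :=
  x.prop.2 ▸ Finset.single_le_sum (fun j _ => x.prop.1 j) (Finset.mem_univ i)

lemma eq_piSingle_of_apply_eq_one {m : ℕ} (x : ClState m) {k : Fin m} (hk : x.val k = 1) :
    x.val = Pi.single k 1 := by
  obtain ⟨hx0, hx1⟩ := x.prop
  have hrest : ∑ j ∈ Finset.univ.erase k, x.val j = 0 := by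
    rw [← Finset.sum_erase_add _ _ (Finset.mem_univ k), hk] at hx1
    linarith
  rw [Finset.sum_eq_zero_iff_of_nonneg fun j _ => hx0 j] at hrest
  ext j
  by_cases hj : j = k
  · simp [hj, hk]
  · simp [hj, hrest j (by simp [hj])]

lemma exists_apply_eq_one_of_shannonEntropy_eq_zero {m : ℕ} (x : ClState m)
    (h : shannonEntropy x = 0) : ∃ k, x.val k = 1 := by
  have hsum : ∑ i, x.val i * Real.log (x.val i) = 0 := neg_eq_zero.mp h
  rw [Finset.sum_eq_zero_iff_of_nonpos fun i _ =>
    Real.mul_log_nonpos (x.prop.1 i) (x.apply_le_one i)] at hsum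
  by_contra! hne
  have hzero (i : Fin m) : x.val i = 0 := by
    rcases mul_eq_zero.mp (hsum i (Finset.mem_univ i)) with h0 | hlog
    · exact h0
    · rcases Real.log_eq_zero.mp hlog with h0 | h1 | hneg
      · exact h0
      · exact absurd h1 (hne i)
      · linarith [x.prop.1 i]
  simpa [hzero] using x.prop.2

lemma exists_eq_piSingle_of_shannonEntropy_eq_zero {m : ℕ} (x : ClState m)
    (h : shannonEntropy x = 0) : ∃ k, x.val = Pi.single k 1 :=
  (x.exists_apply_eq_one_of_shannonEntropy_eq_zero h).imp fun _ => x.eq_piSingle_of_apply_eq_one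

end ClState

section TwoLevel

variable {ι : Type*} [DecidableEq ι] {i j : ι}

noncomputable def twoLevelVec (i j : ι) (t : ℝ) : ι → ℂ :=
  Pi.single i (√t : ℂ) + Pi.single j (√(1 - t) : ℂ)

lemma star_ofReal_sqrt_mul_self {s : ℝ} (hs : 0 ≤ s) : star (√s : ℂ) * √s = s := by
  rw [Complex.star_def, Complex.conj_ofReal, ← Complex.ofReal_mul, Real.mul_self_sqrt hs]

lemma star_dotProduct_twoLevelVec [Fintype ι] (hij : i ≠ j) {t : ℝ} (ht₀ : 0 ≤ t)
    (ht₁ : t ≤ 1) : star (twoLevelVec i j t) ⬝ᵥ twoLevelVec i j t = 1 := by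
  rw [dotProduct, Fintype.sum_eq_add i j hij fun x hx => by simp [twoLevelVec, hx.1, hx.2]]
  simp only [twoLevelVec, Pi.add_apply, Pi.star_apply, Pi.single_eq_same,
    Pi.single_eq_of_ne hij, Pi.single_eq_of_ne hij.symm, add_zero, zero_add,
    star_ofReal_sqrt_mul_self ht₀, star_ofReal_sqrt_mul_self (sub_nonneg.mpr ht₁)]
  push_cast
  ring

lemma vecMulVec_twoLevelVec_apply_self (hij : i ≠ j) {t : ℝ} (ht₀ : 0 ≤ t) :
    vecMulVec (twoLevelVec i j t) (star (twoLevelVec i j t)) i i = t := by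
  simp only [vecMulVec_apply, twoLevelVec, Pi.add_apply, Pi.star_apply, Pi.single_eq_same,
    Pi.single_eq_of_ne hij, add_zero]
  rw [mul_comm, star_ofReal_sqrt_mul_self ht₀]

end TwoLevel

theorem quantum_does_not_embed_in_classical_general (n m : ℕ) (hn : 2 ≤ n) :
    ¬ ∃ φ : QState n → ClState m,
        (∀ ρ τ : QState n, qLE ρ τ ↔ clLE (φ ρ) (φ τ)) ∧
        (∀ ρ : QState n, shannonEntropy (φ ρ) = vnEntropy ρ) := by
  rintro ⟨φ, hord, hent⟩
  let i₀ : Fin n := ⟨0, by omega⟩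
  let i₁ : Fin n := ⟨1, by omega⟩
  have hi : i₀ ≠ i₁ := by simp [i₀, i₁, Fin.ext_iff]
  have hunit (t : Set.Icc (0 : ℝ) 1) := star_dotProduct_twoLevelVec hi t.2.1 t.2.2
  let ρ (t : Set.Icc (0 : ℝ) 1) : QState n := pureState _ (hunit t)
  choose k hk using fun t => (φ (ρ t)).exists_eq_piSingle_of_shannonEntropy_eq_zero
    ((hent (ρ t)).trans (vnEntropy_pureState _ _))
  have := Set.Icc.infinite (zero_lt_one' ℝ)
  obtain ⟨s, t, hst, hkst⟩ := Finite.exists_ne_map_eq_of_infinite k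
  have hle : qLE (ρ s) (ρ t) := (hord _ _).2 <| by
    rw [clLE, hk, hk, hkst]
    exact bayesLE_refl _
  have hst_eq := congrFun₂ (vecMulVec_star_eq_of_specLE (hunit s) (hunit t) hle) i₀ i₀
  rw [vecMulVec_twoLevelVec_apply_self hi s.2.1, vecMulVec_twoLevelVec_apply_self hi t.2.1]
    at hst_eq
  exact hst (Subtype.ext (Complex.ofReal_injective hst_eq))

/-- There is no order embedding of (Ωⁿ, ⊑) into (Δᵐ, ⊑) preserving entropy. -/
theorem quantum_does_not_embed_in_classical (n m : ℕ) (hn : 2 ≤ n) (hm : 2 ≤ m) :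
    ¬ ∃ φ : QState n → ClState m,
        (∀ ρ τ : QState n, qLE ρ τ ↔ clLE (φ ρ) (φ τ)) ∧
        (∀ ρ : QState n, shannonEntropy (φ ρ) = vnEntropy ρ) :=
  quantum_does_not_embed_in_classical_general n m hn
end
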